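/- arXiv:2503.22867 — 2 statements merged into one kernel-verified Lean document; each statement's English description precedes it below -/
import Mathlib

section
/- (Stationary policies are constrained stationary points of the potential) In a Markov potential game under direct policy parameterization, a policy θ* ∈ X is a first-order stationary policy of the game (i.e., (θ_i' − θ_i*)ᵀ ∇_{θ_i} J_i(θ*) ≤ 0 for every θ_i' ∈ X_i and every agent i) if and only if θ* satisfies the blockwise first-order optimality condition for the total potential function Φ over X: (θ_i' − θ_i*)ᵀ ∇_{θ_i} Φ(θ*) ≤ 0 for every θ_i' ∈ X_i and every agent i. -/
open scoped BigOperators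

/-! Common framework for finite Markov games under direct policy
parameterization.  Agents are indexed by `Fin N`, the state space `S` and the
action spaces `A i` are finite.  A policy profile is `θ : ∀ i, S → A i → ℝ`,
feasible when each `θ i s` lies in the probability simplex. -/

section MGDefs

variable {N : ℕ} {S : Type} {A : Fin N → Type}
variable [Fintype S] [∀ i, Fintype (A i)]

/-- Joint policy `π_θ(a|s) = ∏ i, θ_i(a_i|s)` induced by the per-agent
directly parameterized policies. -/
def jointPi (θ : ∀ i, S → A i → ℝ) : S → (∀ i, A i) → ℝ :=
  fun s a => ∏ i, θ i s (a i)

/-- Distribution of the state at time `t` under transition kernel `P`,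
policy `π` and initial distribution `ρ`. -/
def stateDist {σ α : Type} [Fintype σ] [Fintype α] (P : σ → α → σ → ℝ)
    (π : σ → α → ℝ) (ρ : σ → ℝ) : ℕ → σ → ℝ
  | 0 => ρ
  | t + 1 => fun s' => ∑ s, ∑ a, stateDist P π ρ t s * π s a * P s a s'

/-- Expected discounted sum `E[∑ₜ γ^t f(s_t, a_t)]` of a state-action
function `f`, under kernel `P`, policy `π`, and initial distribution `ρ`. -/
noncomputable def expDisc {σ α : Type} [Fintype σ] [Fintype α] (γ : ℝ)
    (P : σ → α → σ → ℝ) (π : σ → α → ℝ) (ρ : σ → ℝ) (f : σ → α → ℝ) : ℝ :=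
  ∑' t : ℕ, γ ^ t * ∑ s, ∑ a, stateDist P π ρ t s * π s a * f s a

/-- Dirac (point-mass) distribution at `s`. -/
def dirac {σ : Type} [DecidableEq σ] (s : σ) : σ → ℝ :=
  fun s' => if s' = s then 1 else 0

/-- Value function `V^θ(s) = E[∑ₜ γ^t f(s_t,a_t) | π_θ, s_0 = s]`. -/
noncomputable def valueV [DecidableEq S] (γ : ℝ) (P : S → (∀ i, A i) → S → ℝ)
    (θ : ∀ i, S → A i → ℝ) (f : S → (∀ i, A i) → ℝ) (s : S) : ℝ :=
  expDisc γ P (jointPi θ) (dirac s) f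

/-- Total objective `J(θ) = E_{s₀ ∼ ρ}[∑ₜ γ^t f(s_t,a_t) | π_θ]`. -/
noncomputable def Jtot (γ : ℝ) (P : S → (∀ i, A i) → S → ℝ) (ρ : S → ℝ)
    (θ : ∀ i, S → A i → ℝ) (f : S → (∀ i, A i) → ℝ) : ℝ :=
  expDisc γ P (jointPi θ) ρ f

/-- The feasible set `X = X_1 × ⋯ × X_N`, `X_i = Δ(A_i)^S`. -/
def feasible (θ : ∀ i, S → A i → ℝ) : Prop :=
  ∀ i, ∀ s, θ i s ∈ stdSimplex ℝ (A i)

/-- Discounted state-visitation measure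
`d_θ(s) = (1-γ) E_{s₀∼ρ} ∑ₜ γ^t Pr^θ(s_t = s | s₀)`. -/
noncomputable def visit (γ : ℝ) (P : S → (∀ i, A i) → S → ℝ)
    (θ : ∀ i, S → A i → ℝ) (ρ : S → ℝ) (s : S) : ℝ :=
  (1 - γ) * ∑' t : ℕ, γ ^ t * stateDist P (jointPi θ) ρ t s

end MGDefs

/-! Along the block of agent `i`, the Markov-potential identity, averaged over `s₀ ∼ ρ`, says that
`J_i - Φ` is constant on the feasible face `{θ_i ∈ Δ(A_i)^S}` through `θ*`. Hence the directional
derivatives of `J_i` and `Φ` at `θ*` agree along every feasible direction `θ_i' - θ_i*`, and the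
two stationarity conditions coincide.

The analytic input is differentiability of `J`. With `P_π` the state-transition matrix of the
policy `π`, the state distribution at time `t` is `ρᵀ P_π^t`, so `J = ρᵀ (1 - γ P_π)⁻¹ r_π` as soon as
`‖γ P_π‖ < 1` in the `ℓ∞` operator norm. This holds at stochastic policies, hence on a
neighbourhood of the feasible set, and there `J` is differentiable because matrix inversion is. -/

lemma fderiv_apply_sub_eq_of_forall_sub_eq {E : Type*} [NormedAddCommGroup E]
    [NormedSpace ℝ E] {f g : E → ℝ} {s : Set E} {x y : E} (hs : Convex ℝ s) (hx : x ∈ s)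
    (hy : y ∈ s) (hf : DifferentiableAt ℝ f x) (hg : DifferentiableAt ℝ g x)
    (hfg : ∀ z ∈ s, f z - f x = g z - g x) :
    fderiv ℝ f x (y - x) = fderiv ℝ g x (y - x) := by
  have hconst : ∀ z ∈ s, (f - g) z = (f - g) x := fun z hz => by
    simp only [Pi.sub_apply]; linarith [hfg z hz]
  have hderiv : HasFDerivWithinAt (f - g) (fderiv ℝ f x - fderiv ℝ g x) s x :=
    (hf.hasFDerivAt.sub hg.hasFDerivAt).hasFDerivWithinAt
  have htangent : y - x ∈ posTangentConeAt s x :=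
    sub_mem_posTangentConeAt_of_segment_subset (hs.segment_subset hx hy)
  have hmax : IsLocalMaxOn (f - g) s x :=
    Filter.eventually_of_mem self_mem_nhdsWithin fun z hz => (hconst z hz).le
  have hmin : IsLocalMinOn (f - g) s x :=
    Filter.eventually_of_mem self_mem_nhdsWithin fun z hz => (hconst z hz).ge
  have := le_antisymm (hmax.hasFDerivWithinAt_nonpos hderiv htangent)
    (hmin.hasFDerivWithinAt_nonneg hderiv htangent)
  rwa [sub_apply, sub_eq_zero] at this

open Matrix
open scoped Matrix.Norms.Operator

section TransitionMatrix

variable {σ α : Type} [Fintype σ] [Fintype α]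

def transitionMatrix (P : σ → α → σ → ℝ) (π : σ → α → ℝ) : Matrix σ σ ℝ :=
  of fun s s' => ∑ a, π s a * P s a s'

def expectedReward (π : σ → α → ℝ) (f : σ → α → ℝ) : σ → ℝ :=
  fun s => ∑ a, π s a * f s a

lemma stateDist_succ_eq_vecMul (P : σ → α → σ → ℝ) (π : σ → α → ℝ) (ρ : σ → ℝ) (t : ℕ) :
    stateDist P π ρ (t + 1) = stateDist P π ρ t ᵥ* transitionMatrix P π := by
  ext s'
  simp only [stateDist, vecMul, dotProduct, transitionMatrix, of_apply, Finset.mul_sum, mul_assoc]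

variable [DecidableEq σ]

lemma stateDist_eq_vecMul_pow (P : σ → α → σ → ℝ) (π : σ → α → ℝ) (ρ : σ → ℝ) (t : ℕ) :
    stateDist P π ρ t = ρ ᵥ* transitionMatrix P π ^ t := by
  induction t with
  | zero => simp [stateDist]
  | succ t ih => rw [stateDist_succ_eq_vecMul, ih, vecMul_vecMul, pow_succ]

lemma expDisc_eq_tsum (γ : ℝ) (P : σ → α → σ → ℝ) (π : σ → α → ℝ) (ρ : σ → ℝ)
    (f : σ → α → ℝ) :
    expDisc γ P π ρ f
      = ∑' t : ℕ, ρ ᵥ* (γ • transitionMatrix P π) ^ t ⬝ᵥ expectedReward π f := by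
  refine tsum_congr fun t => ?_
  rw [smul_pow, vecMul_smul, smul_dotProduct, ← stateDist_eq_vecMul_pow, smul_eq_mul]
  simp only [dotProduct, expectedReward, Finset.mul_sum, mul_assoc]

lemma transitionMatrix_mem_rowStochastic {P : σ → α → σ → ℝ} {π : σ → α → ℝ}
    (hP : ∀ s a, P s a ∈ stdSimplex ℝ σ) (hπ : ∀ s, π s ∈ stdSimplex ℝ α) :
    transitionMatrix P π ∈ rowStochastic ℝ σ := by
  refine mem_rowStochastic_iff_sum.2 ⟨fun s s' => ?_, fun s => ?_⟩
  · exact Finset.sum_nonneg fun a _ => mul_nonneg ((hπ s).1 a) ((hP s a).1 s')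
  · simp only [transitionMatrix, of_apply]
    rw [Finset.sum_comm]
    simp only [← Finset.mul_sum, (hP _ _).2, mul_one, (hπ s).2]

end TransitionMatrix

section LinftyOpNorm

variable {m n σ : Type} [Fintype m] [Fintype n] [Fintype σ] [DecidableEq σ]
  {E : Type} [NormedAddCommGroup E] [NormedSpace ℝ E] {x : E}

lemma Matrix.linfty_opNorm_le_one_of_mem_rowStochastic {M : Matrix σ σ ℝ}
    (hM : M ∈ rowStochastic ℝ σ) : ‖M‖ ≤ 1 := by
  rw [linfty_opNorm_def, NNReal.coe_le_one, Finset.sup_le_iff]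
  intro s _
  rw [← NNReal.coe_le_one, NNReal.coe_sum]
  simp only [coe_nnnorm, Real.norm_eq_abs, abs_of_nonneg (nonneg_of_mem_rowStochastic hM),
    sum_row_of_mem_rowStochastic hM, le_refl]

lemma HasSum.vecMul_dotProduct {M : ℕ → Matrix m n ℝ} {B : Matrix m n ℝ} (h : HasSum M B)
    (ρ : m → ℝ) (v : n → ℝ) : HasSum (fun t => ρ ᵥ* M t ⬝ᵥ v) (ρ ᵥ* B ⬝ᵥ v) := by
  simp only [dotProduct, vecMul, Finset.sum_mul]
  exact hasSum_sum fun j _ => hasSum_sum fun i _ =>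
    ((Pi.hasSum.1 (Pi.hasSum.1 h i) j).mul_left _).mul_right _

lemma Matrix.differentiableAt_of_entries [DecidableEq m] [DecidableEq n] {F : E → Matrix m n ℝ}
    (h : ∀ i j, DifferentiableAt ℝ (fun y => F y i j) x) : DifferentiableAt ℝ F x := by
  have hF : F = fun y => ∑ i, ∑ j, F y i j • single i j (1 : ℝ) := by
    funext y
    conv_lhs => rw [matrix_eq_sum_single (F y)]
    simp only [smul_single, smul_eq_mul, mul_one]
  rw [hF]
  exact DifferentiableAt.fun_sum fun i _ => DifferentiableAt.fun_sum fun j _ =>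
    (h i j).smul_const _

lemma DifferentiableAt.matrix_apply {F : E → Matrix m n ℝ} (hF : DifferentiableAt ℝ F x)
    (i : m) (j : n) : DifferentiableAt ℝ (fun y => F y i j) x :=
  (entryLinearMap ℝ ℝ i j).toContinuousLinearMap.differentiableAt.comp x hF

lemma differentiableAt_vecMul_inverse_one_sub_dotProduct (ρ : σ → ℝ) {M : E → Matrix σ σ ℝ}
    {v : E → σ → ℝ} (hM : DifferentiableAt ℝ M x) (hv : DifferentiableAt ℝ v x)
    (h : ‖M x‖ < 1) :
    DifferentiableAt ℝ (fun y => ρ ᵥ* Ring.inverse (1 - M y) ⬝ᵥ v y) x := by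
  have hinv : DifferentiableAt ℝ (fun y => Ring.inverse (1 - M y)) x :=
    ((differentiableAt_const 1).fun_sub hM).inverse (isUnit_one_sub_of_norm_lt_one h)
  simp only [dotProduct, vecMul]
  exact DifferentiableAt.fun_sum fun j _ => (DifferentiableAt.fun_sum fun i _ =>
    (hinv.matrix_apply i j).const_mul _).mul (differentiableAt_pi.1 hv j)

variable {α : Type} [Fintype α]

lemma norm_smul_transitionMatrix_lt_one {γ : ℝ} (hγ0 : 0 ≤ γ) (hγ1 : γ < 1)
    {P : σ → α → σ → ℝ} {π : σ → α → ℝ}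
    (hP : ∀ s a, P s a ∈ stdSimplex ℝ σ) (hπ : ∀ s, π s ∈ stdSimplex ℝ α) :
    ‖γ • transitionMatrix P π‖ < 1 :=
  calc ‖γ • transitionMatrix P π‖ ≤ γ * 1 := by
        rw [norm_smul, Real.norm_of_nonneg hγ0]
        exact mul_le_mul_of_nonneg_left (linfty_opNorm_le_one_of_mem_rowStochastic
          (transitionMatrix_mem_rowStochastic hP hπ)) hγ0
    _ < 1 := by linarith

lemma expDisc_eq_vecMul_inverse_dotProduct (γ : ℝ) (P : σ → α → σ → ℝ) (π : σ → α → ℝ)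
    (ρ : σ → ℝ) (f : σ → α → ℝ) (h : ‖γ • transitionMatrix P π‖ < 1) :
    expDisc γ P π ρ f
      = ρ ᵥ* Ring.inverse (1 - γ • transitionMatrix P π) ⬝ᵥ expectedReward π f := by
  have hgeom := hasSum_geom_series_inverse _ h
  rw [expDisc_eq_tsum]
  exact (hgeom.vecMul_dotProduct ρ (expectedReward π f)).tsum_eq

lemma expDisc_eq_sum_dirac (γ : ℝ) (P : σ → α → σ → ℝ) (π : σ → α → ℝ) (ρ : σ → ℝ)
    (f : σ → α → ℝ) (h : ‖γ • transitionMatrix P π‖ < 1) :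
    expDisc γ P π ρ f = ∑ s, ρ s * expDisc γ P π (dirac s) f := by
  have hdirac : ∀ s : σ, dirac s = Pi.single s 1 := fun s => funext fun s' => by
    simp [dirac, Pi.single_apply]
  simp only [expDisc_eq_vecMul_inverse_dotProduct γ P π _ f h, hdirac, ← dotProduct_mulVec,
    single_dotProduct, one_mul]
  rfl

end LinftyOpNorm

section MarkovGame

variable {N : ℕ} {S : Type} {A : Fin N → Type} [∀ i, Fintype (A i)]

lemma jointPi_mem_stdSimplex {θ : ∀ i, S → A i → ℝ} (hθ : feasible θ) (s : S) :
    jointPi θ s ∈ stdSimplex ℝ (∀ i, A i) := by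
  refine ⟨fun a => Finset.prod_nonneg fun j _ => (hθ j s).1 (a j), ?_⟩
  show ∑ a : ∀ i, A i, ∏ j, θ j s (a j) = 1
  rw [← Fintype.prod_sum]
  exact Finset.prod_eq_one fun j _ => (hθ j s).2

lemma feasible_update {θ : ∀ i, S → A i → ℝ} (hθ : feasible θ) {i : Fin N} {x : S → A i → ℝ}
    (hx : ∀ s, x s ∈ stdSimplex ℝ (A i)) : feasible (Function.update θ i x) := by
  intro j s
  rcases eq_or_ne j i with rfl | hji
  · rw [Function.update_self]; exact hx s
  · rw [Function.update_of_ne hji]; exact hθ j s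

variable [Fintype S]

lemma differentiable_jointPi_update (θ : ∀ j, S → A j → ℝ) (i : Fin N) (s : S)
    (a : ∀ j, A j) :
    Differentiable ℝ (fun x : S → A i → ℝ => jointPi (Function.update θ i x) s a) := by
  have hupdate : Differentiable ℝ (Function.update θ i) := fun x =>
    (hasFDerivAt_update θ x).differentiableAt
  have hcoord : ∀ j, Differentiable ℝ (fun x : S → A i → ℝ => Function.update θ i x j s (a j)) :=
    fun j => differentiable_pi.1 (differentiable_pi.1 (differentiable_pi.1 hupdate j) s) (a j)
  unfold jointPi
  fun_prop

variable [DecidableEq S] {γ : ℝ} {P : S → (∀ i, A i) → S → ℝ}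

lemma Jtot_eq_sum_valueV (hγ0 : 0 ≤ γ) (hγ1 : γ < 1) (hP : ∀ s a, P s a ∈ stdSimplex ℝ S)
    (ρ : S → ℝ) {θ : ∀ i, S → A i → ℝ} (hθ : feasible θ) (f : S → (∀ i, A i) → ℝ) :
    Jtot γ P ρ θ f = ∑ s, ρ s * valueV γ P θ f s :=
  expDisc_eq_sum_dirac γ P _ ρ f
    (norm_smul_transitionMatrix_lt_one hγ0 hγ1 hP (jointPi_mem_stdSimplex hθ))

lemma differentiableAt_Jtot_update (hγ0 : 0 ≤ γ) (hγ1 : γ < 1)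
    (hP : ∀ s a, P s a ∈ stdSimplex ℝ S) (ρ : S → ℝ) {θ : ∀ i, S → A i → ℝ} (hθ : feasible θ)
    (i : Fin N) (f : S → (∀ i, A i) → ℝ) :
    DifferentiableAt ℝ (fun x : S → A i → ℝ => Jtot γ P ρ (Function.update θ i x) f) (θ i) := by
  set π := fun x : S → A i → ℝ => jointPi (Function.update θ i x)
  have hM : Differentiable ℝ fun x => γ • transitionMatrix P (π x) := fun x =>
    (differentiableAt_of_entries fun s s' => DifferentiableAt.fun_sum fun a _ =>
      ((differentiable_jointPi_update θ i s a) x).mul_const _).const_smul γ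
  have hr : Differentiable ℝ fun x => expectedReward (π x) f := fun x =>
    differentiableAt_pi.2 fun s => DifferentiableAt.fun_sum fun a _ =>
      ((differentiable_jointPi_update θ i s a) x).mul_const _
  have hlt : ‖γ • transitionMatrix P (π (θ i))‖ < 1 := by
    simp only [π, Function.update_eq_self]
    exact norm_smul_transitionMatrix_lt_one hγ0 hγ1 hP (jointPi_mem_stdSimplex hθ)
  refine (differentiableAt_vecMul_inverse_one_sub_dotProduct ρ (hM _) (hr _) hlt)
    |>.congr_of_eventuallyEq ?_
  filter_upwards [hM.continuous.norm.continuousAt.eventually_lt continuousAt_const hlt]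
    with x hx using expDisc_eq_vecMul_inverse_dotProduct γ P (π x) ρ f hx

def IsMarkovPotential (γ : ℝ) (P : S → (∀ i, A i) → S → ℝ) (r : Fin N → S → (∀ i, A i) → ℝ)
    (φ : S → (∀ i, A i) → ℝ) : Prop :=
  ∀ i : Fin N, ∀ θ : ∀ j, S → A j → ℝ, feasible θ →
    ∀ θi' : S → A i → ℝ, (∀ s, θi' s ∈ stdSimplex ℝ (A i)) → ∀ s : S,
      valueV γ P (Function.update θ i θi') (r i) s - valueV γ P θ (r i) s
        = valueV γ P (Function.update θ i θi') φ s - valueV γ P θ φ s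

lemma IsMarkovPotential.Jtot_update_sub {r : Fin N → S → (∀ i, A i) → ℝ}
    {φ : S → (∀ i, A i) → ℝ} (h : IsMarkovPotential γ P r φ) (hγ0 : 0 ≤ γ) (hγ1 : γ < 1)
    (hP : ∀ s a, P s a ∈ stdSimplex ℝ S) (ρ : S → ℝ) {θ : ∀ i, S → A i → ℝ} (hθ : feasible θ)
    {i : Fin N} {x : S → A i → ℝ} (hx : ∀ s, x s ∈ stdSimplex ℝ (A i)) :
    Jtot γ P ρ (Function.update θ i x) (r i) - Jtot γ P ρ θ (r i)
      = Jtot γ P ρ (Function.update θ i x) φ - Jtot γ P ρ θ φ := by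
  have hθx := feasible_update hθ hx
  simp only [Jtot_eq_sum_valueV hγ0 hγ1 hP ρ hθx, Jtot_eq_sum_valueV hγ0 hγ1 hP ρ hθ,
    ← Finset.sum_sub_distrib, ← mul_sub, h i θ hθ x hx]

end MarkovGame

theorem stationary_iff_blockwise_stationary_potential_general
    {N : ℕ} {S : Type} {A : Fin N → Type}
    [Fintype S] [DecidableEq S]
    [∀ i, Fintype (A i)]
    (γ : ℝ) (hγ0 : 0 ≤ γ) (hγ1 : γ < 1)
    (P : S → (∀ i, A i) → S → ℝ) (hP : ∀ s a, P s a ∈ stdSimplex ℝ S)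
    (r : Fin N → S → (∀ i, A i) → ℝ)
    (ρ : S → ℝ)
    (φ : S → (∀ i, A i) → ℝ)
    -- the game is an MPG with potential function φ:
    (hMPG : ∀ i : Fin N, ∀ θ : ∀ j, S → A j → ℝ, feasible θ →
      ∀ θi' : S → A i → ℝ, (∀ s, θi' s ∈ stdSimplex ℝ (A i)) → ∀ s : S,
        valueV γ P (Function.update θ i θi') (r i) s - valueV γ P θ (r i) s
          = valueV γ P (Function.update θ i θi') φ s - valueV γ P θ φ s)
    (θs : ∀ i, S → A i → ℝ) (hθs : feasible θs) :
    -- θs is a first-order stationary policy of the game ↔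
    -- θs is a blockwise first-order stationary point of Φ over X
    (∀ i : Fin N, ∀ θi' : S → A i → ℝ,
      (∀ s, θi' s ∈ stdSimplex ℝ (A i)) →
      fderiv ℝ (fun x : S → A i → ℝ =>
          Jtot γ P ρ (Function.update θs i x) (r i)) (θs i) (θi' - θs i) ≤ 0)
    ↔
    (∀ i : Fin N, ∀ θi' : S → A i → ℝ,
      (∀ s, θi' s ∈ stdSimplex ℝ (A i)) →
      fderiv ℝ (fun x : S → A i → ℝ =>
          Jtot γ P ρ (Function.update θs i x) φ) (θs i) (θi' - θs i) ≤ 0) := by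
  have hMPG' : IsMarkovPotential γ P r φ := hMPG
  have hderiv : ∀ i (θi' : S → A i → ℝ), (∀ s, θi' s ∈ stdSimplex ℝ (A i)) →
      fderiv ℝ (fun x => Jtot γ P ρ (Function.update θs i x) (r i)) (θs i) (θi' - θs i)
        = fderiv ℝ (fun x => Jtot γ P ρ (Function.update θs i x) φ) (θs i) (θi' - θs i) :=
    fun i θi' hθi' => fderiv_apply_sub_eq_of_forall_sub_eq
      (convex_pi fun s _ => convex_stdSimplex ℝ (A i)) (Set.mem_univ_pi.2 (hθs i))
      (Set.mem_univ_pi.2 hθi') (differentiableAt_Jtot_update hγ0 hγ1 hP ρ hθs i (r i))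
      (differentiableAt_Jtot_update hγ0 hγ1 hP ρ hθs i φ) fun x hx => by
        simpa only [Function.update_eq_self] using
          hMPG'.Jtot_update_sub hγ0 hγ1 hP ρ hθs (Set.mem_univ_pi.1 hx)
  exact forall_congr' fun i => forall_congr' fun θi' => forall_congr' fun hθi' => by
    rw [hderiv i θi' hθi']

/-- **Stationary policies are constrained stationary points of
the potential.** In a Markov potential game under direct policy
parameterization, a feasible policy is a first-order stationary policy of the
game if and only if it satisfies the blockwise first-order optimality
condition for the total potential function `Φ` over `X`. -/
theorem stationary_iff_blockwise_stationary_potential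
    {N : ℕ} {S : Type} {A : Fin N → Type}
    [Fintype S] [DecidableEq S] [Nonempty S]
    [∀ i, Fintype (A i)] [∀ i, Nonempty (A i)]
    (γ : ℝ) (hγ0 : 0 ≤ γ) (hγ1 : γ < 1)
    (P : S → (∀ i, A i) → S → ℝ) (hP : ∀ s a, P s a ∈ stdSimplex ℝ S)
    (r : Fin N → S → (∀ i, A i) → ℝ)
    (ρ : S → ℝ) (hρ : ρ ∈ stdSimplex ℝ S)
    (φ : S → (∀ i, A i) → ℝ)
    -- the game is an MPG with potential function φ:
    (hMPG : ∀ i : Fin N, ∀ θ : ∀ j, S → A j → ℝ, feasible θ →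
      ∀ θi' : S → A i → ℝ, (∀ s, θi' s ∈ stdSimplex ℝ (A i)) → ∀ s : S,
        valueV γ P (Function.update θ i θi') (r i) s - valueV γ P θ (r i) s
          = valueV γ P (Function.update θ i θi') φ s - valueV γ P θ φ s)
    (θs : ∀ i, S → A i → ℝ) (hθs : feasible θs) :
    -- θs is a first-order stationary policy of the game ↔
    -- θs is a blockwise first-order stationary point of Φ over X
    (∀ i : Fin N, ∀ θi' : S → A i → ℝ,
      (∀ s, θi' s ∈ stdSimplex ℝ (A i)) →
      fderiv ℝ (fun x : S → A i → ℝ =>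
          Jtot γ P ρ (Function.update θs i x) (r i)) (θs i) (θi' - θs i) ≤ 0)
    ↔
    (∀ i : Fin N, ∀ θi' : S → A i → ℝ,
      (∀ s, θi' s ∈ stdSimplex ℝ (A i)) →
      fderiv ℝ (fun x : S → A i → ℝ =>
          Jtot γ P ρ (Function.update θs i x) φ) (θs i) (θi' - θs i) ≤ 0) :=
  stationary_iff_blockwise_stationary_potential_general γ hγ0 hγ1 P hP r ρ φ hMPG θs hθs
end

section
/- (Per-state invariance of other agents' value contributions) In a finite product-structured Markov game with factorized transition kernel P(s'|s,a) = ∏_{i=1}^N P_i(s_i'|s_i,a_i) and local policies π_{i,θ_i}(a_i|s_i), fix an agent i, an agent j ≠ i, a function g : S_j × A_j → ℝ, and an initial state s = (s_1,…,s_N) ∈ S. Then the expected discounted sum E[Σ_{t=0}^∞ γ^t g(s_{j,t}, a_{j,t}) | π_{(θ_i,θ_{-i})}, s_0 = s] does not depend on θ_i ∈ X_i; it equals the value computed in agent j's isolated Markov decision process (S_j, A_j, P_j, g, γ) under policy θ_j starting from s_j. -/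
open scoped BigOperators

/-! Common framework for finite *product-structured* Markov games.  Agents are
indexed by `Fin N`; agent `i` has local finite state space `S i` and finite
action space `A i`.  The global state space is `∀ i, S i`, the transition
kernel factorizes per agent, the initial distribution is a product, and each
agent uses a local directly parameterized policy `θ i : S i → A i → ℝ`. -/

section ProdMGDefs

variable {N : ℕ} {S A : Fin N → Type}
variable [∀ i, Fintype (S i)] [∀ i, Fintype (A i)]

/-- Joint policy `π_θ(a|s) = ∏ i, θ_i(a_i|s_i)` induced by the local
directly parameterized policies. -/
def jointPiL (θ : ∀ i, S i → A i → ℝ) : (∀ i, S i) → (∀ i, A i) → ℝ :=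
  fun s a => ∏ i, θ i (s i) (a i)

/-- Factorized transition kernel `P(s'|s,a) = ∏ i, P_i(s_i'|s_i,a_i)`. -/
def jointP (P : ∀ i, S i → A i → S i → ℝ) :
    (∀ i, S i) → (∀ i, A i) → (∀ i, S i) → ℝ :=
  fun s a s' => ∏ i, P i (s i) (a i) (s' i)

/-- Product initial state distribution `ρ = ρ_1 ⊗ ⋯ ⊗ ρ_N`. -/
def jointRho (ρ : ∀ i, S i → ℝ) : (∀ i, S i) → ℝ :=
  fun s => ∏ i, ρ i (s i)

/-- The feasible set of local policy profiles: each `θ i (s i)` lies in the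
probability simplex `Δ(A i)`. -/
def feasibleL (θ : ∀ i, S i → A i → ℝ) : Prop :=
  ∀ i, ∀ si, θ i si ∈ stdSimplex ℝ (A i)

end ProdMGDefs

section Aux

/-- Summing a product over a pi type, with an extra factor depending on one
coordinate `j`, where all other factors sum to one. -/
lemma sum_pi_prod_mul {ι : Type} [Fintype ι] [DecidableEq ι] {β : ι → Type}
    [∀ i, Fintype (β i)] (j : ι) (h : ∀ i, β i → ℝ) (g : β j → ℝ)
    (h1 : ∀ i, i ≠ j → ∑ y, h i y = 1) :
    ∑ x : ∀ i, β i, (∏ i, h i (x i)) * g (x j) = ∑ y, h j y * g y := by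
  classical
  set F : ∀ i, β i → ℝ := Function.update h j (fun y => h j y * g y) with hF
  have hFne : ∀ i, i ≠ j → F i = h i := fun i hi => Function.update_of_ne hi _ _
  have key : ∀ x : ∀ i, β i, (∏ i, h i (x i)) * g (x j) = ∏ i, F i (x i) := by
    intro x
    rw [← Finset.mul_prod_erase Finset.univ (fun i => F i (x i)) (Finset.mem_univ j)]
    rw [← Finset.mul_prod_erase Finset.univ (fun i => h i (x i)) (Finset.mem_univ j)]
    have : ∏ i ∈ Finset.univ.erase j, F i (x i) = ∏ i ∈ Finset.univ.erase j, h i (x i) :=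
      Finset.prod_congr rfl fun i hi => by rw [hFne i (Finset.ne_of_mem_erase hi)]
    rw [this]
    have : F j (x j) = h j (x j) * g (x j) := by rw [hF, Function.update_self]
    rw [this]; ring
  calc ∑ x : ∀ i, β i, (∏ i, h i (x i)) * g (x j)
      = ∑ x : ∀ i, β i, ∏ i, F i (x i) := Finset.sum_congr rfl fun x _ => key x
    _ = ∏ i, ∑ y, F i y := (Fintype.prod_sum F).symm
    _ = ∑ y, h j y * g y := by
        rw [← Finset.mul_prod_erase Finset.univ (fun i => ∑ y, F i y) (Finset.mem_univ j)]
        have h2 : ∏ i ∈ Finset.univ.erase j, ∑ y, F i y = 1 := by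
          refine Finset.prod_eq_one fun i hi => ?_
          rw [hFne i (Finset.ne_of_mem_erase hi)]
          exact h1 i (Finset.ne_of_mem_erase hi)
        rw [h2, mul_one, hF, Function.update_self]

variable {N : ℕ} {S A : Fin N → Type}
variable [∀ i, Fintype (S i)] [∀ i, Fintype (A i)]

/-- Factorization of the joint state distribution over agents. -/
lemma stateDist_pi (P : ∀ i, S i → A i → S i → ℝ) (θ : ∀ i, S i → A i → ℝ)
    (ρ : ∀ i, S i → ℝ) :
    ∀ t st, stateDist (jointP P) (jointPiL θ) (jointRho ρ) t st
      = ∏ i, stateDist (P i) (θ i) (ρ i) t (st i)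
  | 0, st => rfl
  | t + 1, st => by
    have IH := stateDist_pi P θ ρ t
    show (∑ s, ∑ a, stateDist (jointP P) (jointPiL θ) (jointRho ρ) t s *
        jointPiL θ s a * jointP P s a st) = _
    calc (∑ s, ∑ a, stateDist (jointP P) (jointPiL θ) (jointRho ρ) t s *
          jointPiL θ s a * jointP P s a st)
        = ∑ s : ∀ i, S i, ∑ a : ∀ i, A i,
            ∏ i, (stateDist (P i) (θ i) (ρ i) t (s i) * θ i (s i) (a i)
              * P i (s i) (a i) (st i)) := by
          refine Finset.sum_congr rfl fun s _ => Finset.sum_congr rfl fun a _ => ?_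
          rw [IH, jointPiL, jointP, ← Finset.prod_mul_distrib, ← Finset.prod_mul_distrib]
      _ = ∑ s : ∀ i, S i, ∏ i, ∑ ai, (stateDist (P i) (θ i) (ρ i) t (s i)
            * θ i (s i) ai * P i (s i) ai (st i)) := by
          refine Finset.sum_congr rfl fun s _ => ?_
          rw [Fintype.prod_sum]
      _ = ∏ i, ∑ si, ∑ ai, (stateDist (P i) (θ i) (ρ i) t si
            * θ i si ai * P i si ai (st i)) := by rw [Fintype.prod_sum]
      _ = ∏ i, stateDist (P i) (θ i) (ρ i) (t + 1) (st i) := rfl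

/-- The dirac distribution on a product state is the product of diracs. -/
lemma dirac_pi [∀ i, DecidableEq (S i)] (s : ∀ i, S i) :
    dirac s = jointRho (fun k => dirac (s k)) := by
  classical
  funext st
  by_cases h : st = s
  · subst h; simp [dirac, jointRho]
  · have : ∃ i, st i ≠ s i := by
      by_contra hc
      push_neg at hc
      exact h (funext hc)
    obtain ⟨i, hi⟩ := this
    rw [jointRho]
    rw [Finset.prod_eq_zero (Finset.mem_univ i) (by simp [dirac, hi])]
    simp [dirac, h]

/-- The state distribution is a probability distribution at every time. -/
lemma stateDist_sum_one {σ α : Type} [Fintype σ] [Fintype α]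
    (P : σ → α → σ → ℝ) (π : σ → α → ℝ) (ρ : σ → ℝ)
    (hP : ∀ s a, ∑ s', P s a s' = 1) (hπ : ∀ s, ∑ a, π s a = 1)
    (hρ : ∑ s, ρ s = 1) : ∀ t, ∑ s, stateDist P π ρ t s = 1
  | 0 => hρ
  | t + 1 => by
    have IH := stateDist_sum_one P π ρ hP hπ hρ t
    show (∑ s' : σ, ∑ s, ∑ a, stateDist P π ρ t s * π s a * P s a s') = 1
    rw [Finset.sum_comm]
    calc (∑ s : σ, ∑ s' : σ, ∑ a, stateDist P π ρ t s * π s a * P s a s')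
        = ∑ s : σ, ∑ a, ∑ s', stateDist P π ρ t s * π s a * P s a s' := by
          exact Finset.sum_congr rfl fun s _ => Finset.sum_comm
      _ = ∑ s : σ, ∑ a, stateDist P π ρ t s * π s a := by
          refine Finset.sum_congr rfl fun s _ => Finset.sum_congr rfl fun a _ => ?_
          rw [← Finset.mul_sum, hP, mul_one]
      _ = ∑ s : σ, stateDist P π ρ t s := by
          refine Finset.sum_congr rfl fun s _ => ?_
          rw [← Finset.mul_sum, hπ, mul_one]
      _ = 1 := IH

lemma dirac_sum_one {σ : Type} [Fintype σ] [DecidableEq σ] (s : σ) :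
    ∑ s', dirac s s' = 1 := by simp [dirac]

/-- The per-time-step marginalization: the joint expectation of a function of
agent `j`'s state and action equals the corresponding isolated quantity. -/
lemma term_eq [∀ i, DecidableEq (S i)] (P : ∀ i, S i → A i → S i → ℝ)
    (hP : ∀ i si ai, P i si ai ∈ stdSimplex ℝ (S i))
    (j : Fin N) (g : S j → A j → ℝ) (s : ∀ k, S k)
    (θ : ∀ k, S k → A k → ℝ) (hθ : feasibleL θ) (t : ℕ) :
    (∑ st, ∑ b, stateDist (jointP P) (jointPiL θ) (dirac s) t st *
        jointPiL θ st b * g (st j) (b j))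
      = ∑ sj, ∑ aj, stateDist (P j) (θ j) (dirac (s j)) t sj * θ j sj aj * g sj aj := by
  classical
  have hθ1 : ∀ k sk, ∑ a, θ k sk a = 1 := fun k sk => (hθ k sk).2
  have hP1 : ∀ (k : Fin N) sk ak, ∑ s', P k sk ak s' = 1 := fun k sk ak => (hP k sk ak).2
  have hD : ∀ st, stateDist (jointP P) (jointPiL θ) (dirac s) t st
      = ∏ i, stateDist (P i) (θ i) (dirac (s i)) t (st i) := by
    intro st
    rw [dirac_pi s, stateDist_pi]
  calc (∑ st, ∑ b, stateDist (jointP P) (jointPiL θ) (dirac s) t st *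
          jointPiL θ st b * g (st j) (b j))
      = ∑ st : ∀ i, S i, (∏ i, stateDist (P i) (θ i) (dirac (s i)) t (st i)) *
          (∑ aj, θ j (st j) aj * g (st j) aj) := by
        refine Finset.sum_congr rfl fun st _ => ?_
        rw [← sum_pi_prod_mul j (fun i => θ i (st i)) (g (st j))
          (fun i _ => hθ1 i (st i)), Finset.mul_sum]
        refine Finset.sum_congr rfl fun b _ => ?_
        rw [hD st, jointPiL]; ring
    _ = ∑ sj, stateDist (P j) (θ j) (dirac (s j)) t sj *
          (∑ aj, θ j sj aj * g sj aj) := by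
        refine sum_pi_prod_mul j (fun i => stateDist (P i) (θ i) (dirac (s i)) t)
          (fun sj => ∑ aj, θ j sj aj * g sj aj) (fun i _ => ?_)
        exact stateDist_sum_one (P i) (θ i) (dirac (s i)) (hP1 i) (hθ1 i)
          (dirac_sum_one (s i)) t
    _ = ∑ sj, ∑ aj, stateDist (P j) (θ j) (dirac (s j)) t sj * θ j sj aj * g sj aj := by
        refine Finset.sum_congr rfl fun sj _ => ?_
        rw [Finset.mul_sum]
        refine Finset.sum_congr rfl fun aj _ => by ring

end Aux

/-- **Per-state invariance of other agents' value
contributions.** In a finite product-structured Markov game, for agents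
`i ≠ j`, a function `g` of agent `j`'s local state and action, and any initial
global state `s`, the expected discounted sum `E[∑ₜ γ^t g(s_{j,t}, a_{j,t})]`
does not depend on `θ i`, and it equals the value computed in agent `j`'s
isolated MDP `(S j, A j, P j, g, γ)` under policy `θ j` started from `s j`. -/
theorem per_state_invariance_of_other_agents_value
    {N : ℕ} {S A : Fin N → Type}
    [∀ i, Fintype (S i)] [∀ i, DecidableEq (S i)] [∀ i, Fintype (A i)]
    [∀ i, Nonempty (S i)] [∀ i, Nonempty (A i)]
    (γ : ℝ) (hγ0 : 0 ≤ γ) (hγ1 : γ < 1)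
    (P : ∀ i, S i → A i → S i → ℝ)
    (hP : ∀ i si ai, P i si ai ∈ stdSimplex ℝ (S i))
    (i j : Fin N) (hij : j ≠ i)
    (g : S j → A j → ℝ)
    (s : ∀ k, S k)
    (θ : ∀ k, S k → A k → ℝ) (hθ : feasibleL θ) :
    -- the expected discounted sum does not depend on θ i ...
    (∀ θi' : S i → A i → ℝ, (∀ si, θi' si ∈ stdSimplex ℝ (A i)) →
      expDisc γ (jointP P) (jointPiL (Function.update θ i θi')) (dirac s)
          (fun st b => g (st j) (b j))
        = expDisc γ (jointP P) (jointPiL θ) (dirac s)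
          (fun st b => g (st j) (b j)))
    ∧
    -- ... and it equals agent j's isolated-MDP value from s j:
    expDisc γ (jointP P) (jointPiL θ) (dirac s) (fun st b => g (st j) (b j))
      = expDisc γ (P j) (θ j) (dirac (s j)) g := by
  classical
  have main : ∀ (θ' : ∀ k, S k → A k → ℝ), feasibleL θ' →
      expDisc γ (jointP P) (jointPiL θ') (dirac s) (fun st b => g (st j) (b j))
        = expDisc γ (P j) (θ' j) (dirac (s j)) g := by
    intro θ' hθ'
    unfold expDisc
    exact tsum_congr fun t => by rw [term_eq P hP j g s θ' hθ' t]
  constructor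
  · intro θi' hθi'
    have hfeas : feasibleL (Function.update θ i θi') := by
      intro k sk
      by_cases hk : k = i
      · subst hk; rw [Function.update_self]; exact hθi' sk
      · rw [Function.update_of_ne hk]; exact hθ k sk
    rw [main _ hfeas, main θ hθ, Function.update_of_ne hij]
  · exact main θ hθ
end
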